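/- arXiv:2210.02686 — 2 statements merged into one kernel-verified Lean document; each statement's English description precedes it below -/
import Mathlib

section
/- For any two Markovian policies Π = (d_1,...,d_{T-1}) and Π̃ = (d̃_1,...,d̃_{T-1}) and any time t ≤ T-1, the quantity f_t(Π̃, Θ^Π_m, Q^Π_m) := Σ_{x,a} θ^Π_{m,t}(x) d̃_t(x,a) Q^Π_{m,t}(x,a) equals J_m(η, α_m), the risk-sensitive value E^η_{α_m}[ exp(Σ_{τ=1}^{T-1} m_τ(X_τ,A_τ,X_{τ+1}) + m_T(X_T)) ] of the policy η = (d_1,...,d_{t-1}, d̃_t, d_{t+1},...,d_{T-1}) that differs from Π only at epoch t. -/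
open Finset Real MeasureTheory

noncomputable section

variable {S A : Type*} [Fintype S] [Fintype A] [DecidableEq S] [DecidableEq A]

namespace RiskCMDP

/-- Probability weight of a full trajectory `(s, a)` of `N` transitions under policy `d`,
kernel `p` and initial distribution `α`. -/
def trajWeight (N : ℕ) (α : S → ℝ) (d : ℕ → S → A → ℝ) (p : ℕ → S → A → S → ℝ)
    (s : Fin (N+1) → S) (a : Fin N → A) : ℝ :=
  α (s 0) * ∏ k : Fin N, d k (s k.castSucc) (a k) * p k (s k.castSucc) (a k) (s k.succ)

/-- Accumulated cost of a full trajectory, including terminal cost. -/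
def totalCost (N : ℕ) (m : ℕ → S → A → S → ℝ) (mT : S → ℝ)
    (s : Fin (N+1) → S) (a : Fin N → A) : ℝ :=
  (∑ k : Fin N, m k (s k.castSucc) (a k) (s k.succ)) + mT (s (Fin.last N))

/-- Risk-sensitive value `J_m(Π, α) = E[exp(Σ m_t + m_T)]`. -/
def J (N : ℕ) (α : S → ℝ) (d : ℕ → S → A → ℝ) (p : ℕ → S → A → S → ℝ)
    (m : ℕ → S → A → S → ℝ) (mT : S → ℝ) : ℝ :=
  ∑ s : Fin (N+1) → S, ∑ a : Fin N → A,
    trajWeight N α d p s a * Real.exp (totalCost N m mT s a)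

/-- Forward factor `θ^Π_{m,t}(x) = E[exp(Σ_{k<t} m_k) 1{X_t = x}]` (0-based time `t`). -/
def theta (α : S → ℝ) (d : ℕ → S → A → ℝ) (p : ℕ → S → A → S → ℝ)
    (m : ℕ → S → A → S → ℝ) (t : ℕ) (x : S) : ℝ :=
  ∑ s : Fin (t+1) → S, ∑ a : Fin t → A,
    (if s (Fin.last t) = x then
      α (s 0) * ∏ k : Fin t, (d k (s k.castSucc) (a k) * p k (s k.castSucc) (a k) (s k.succ)
        * Real.exp (m k (s k.castSucc) (a k) (s k.succ)))
     else 0)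

/-- Backward factor with `r` remaining transitions (absolute time `N - r`). -/
def Qaux (N : ℕ) (d : ℕ → S → A → ℝ) (p : ℕ → S → A → S → ℝ)
    (m : ℕ → S → A → S → ℝ) (mT : S → ℝ) : ℕ → S → A → ℝ
  | 0, x, _ => Real.exp (mT x)
  | (r+1), x, a =>
      ∑ x' : S, ∑ a' : A,
        Real.exp (m (N - (r+1)) x a x') * p (N - (r+1)) x a x'
          * d (N - r) x' a' * Qaux N d p m mT r x' a'

/-- Backward factor `Q^Π_{m,t}(x,a)` at (0-based) time `t ≤ N`. -/
def Qb (N : ℕ) (d : ℕ → S → A → ℝ) (p : ℕ → S → A → S → ℝ)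
    (m : ℕ → S → A → S → ℝ) (mT : S → ℝ) (t : ℕ) (x : S) (a : A) : ℝ :=
  Qaux N d p m mT (N - t) x a

/-- `f_t(Π̃, Θ^Π_m, Q^Π_m) = Σ_{x,a} θ^Π_{m,t}(x) d̃_t(x,a) Q^Π_{m,t}(x,a)`. -/
def fF (N : ℕ) (α : S → ℝ) (d dtil : ℕ → S → A → ℝ) (p : ℕ → S → A → S → ℝ)
    (m : ℕ → S → A → S → ℝ) (mT : S → ℝ) (t : ℕ) : ℝ :=
  ∑ x : S, ∑ a : A, theta α d p m t x * dtil t x a * Qb N d p m mT t x a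

/-- A Markovian randomized policy. -/
def isPolicy (d : ℕ → S → A → ℝ) : Prop :=
  (∀ t x a, 0 ≤ d t x a) ∧ ∀ t x, ∑ a : A, d t x a = 1

/-- A transition kernel. -/
def isKernel (p : ℕ → S → A → S → ℝ) : Prop :=
  (∀ t x a x', 0 ≤ p t x a x') ∧ ∀ t x a, ∑ x' : S, p t x a x' = 1

/-- A probability distribution on states. -/
def isDist (α : S → ℝ) : Prop := (∀ x, 0 ≤ α x) ∧ ∑ x : S, α x = 1

/-- The one-step modification `η^t_{Π,Π̃}`: follow `d` except at epoch `t`, where `dtil` is used. -/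
def update (d dtil : ℕ → S → A → ℝ) (t : ℕ) : ℕ → S → A → ℝ :=
  fun k => if k = t then dtil k else d k


section Aux

variable (N : ℕ) (α : S → ℝ) (d : ℕ → S → A → ℝ) (p : ℕ → S → A → S → ℝ)
    (m : ℕ → S → A → S → ℝ) (mT : S → ℝ)

lemma theta_sum (t : ℕ) (g : S → ℝ) :
    ∑ x : S, theta α d p m t x * g x
      = ∑ s : Fin (t+1) → S, ∑ a : Fin t → A,
          (α (s 0) * ∏ k : Fin t, (d k (s k.castSucc) (a k) * p k (s k.castSucc) (a k) (s k.succ)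
            * Real.exp (m k (s k.castSucc) (a k) (s k.succ)))) * g (s (Fin.last t)) := by
  unfold theta
  simp only [Finset.sum_mul, ite_mul, zero_mul]
  rw [Finset.sum_comm]
  refine Finset.sum_congr rfl fun s _ => ?_
  rw [Finset.sum_comm]
  refine Finset.sum_congr rfl fun a _ => ?_
  simp [Finset.sum_ite_eq]

set_option linter.unusedSectionVars false

lemma J_eq_theta : J N α d p m mT = ∑ x : S, theta α d p m N x * Real.exp (mT x) := by
  rw [theta_sum]
  unfold J trajWeight totalCost
  refine Finset.sum_congr rfl fun s _ => Finset.sum_congr rfl fun a _ => ?_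
  simp only [Real.exp_add, Real.exp_sum, Finset.prod_mul_distrib]
  ring

lemma theta_succ (t : ℕ) (x' : S) :
    theta α d p m (t+1) x' =
      ∑ x : S, theta α d p m t x *
        ∑ b : A, d t x b * p t x b x' * Real.exp (m t x b x') := by
  rw [theta_sum]
  unfold theta
  rw [← Equiv.sum_comp (Fin.snocEquiv (fun _ : Fin (t+2) => S)), Fintype.sum_prod_type,
    Finset.sum_comm]
  refine Finset.sum_congr rfl fun s₀ _ => ?_
  rw [Finset.sum_comm]
  rw [← Equiv.sum_comp (Fin.snocEquiv (fun _ : Fin (t+1) => A)), Fintype.sum_prod_type,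
    Finset.sum_comm]
  simp only [Finset.mul_sum]
  refine Finset.sum_congr rfl fun a₀ _ => Finset.sum_congr rfl fun b _ => ?_
  simp only [Fin.snocEquiv_apply, Fin.snoc_last]
  rw [Finset.sum_ite_eq' Finset.univ x']
  simp only [Finset.mem_univ, if_true]
  rw [Fin.prod_univ_castSucc]
  have h0 : (Fin.snoc s₀ x' : Fin (t+2) → S) 0 = s₀ 0 := by
    rw [← Fin.castSucc_zero, Fin.snoc_castSucc]
  simp only [Fin.snoc_castSucc, Fin.succ_castSucc, Fin.snoc_last, Fin.succ_last,
    Fin.coe_castSucc, Fin.val_last, h0]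
  ring

lemma Qb_rec {t : ℕ} (ht : t < N) (x : S) (a : A) :
    Qb N d p m mT t x a = ∑ x' : S, ∑ a' : A,
      Real.exp (m t x a x') * p t x a x' * d (t+1) x' a' * Qb N d p m mT (t+1) x' a' := by
  unfold Qb
  have h1 : N - t = (N - (t+1)) + 1 := by omega
  rw [h1, Qaux]
  have h2 : N - (N - (t+1) + 1) = t := by omega
  have h3 : N - (N - (t+1)) = t + 1 := by omega
  rw [h2, h3]

lemma Qaux_congr (d' : ℕ → S → A → ℝ) :
    ∀ r, r ≤ N → (∀ k, N - r < k → d k = d' k) → ∀ x a,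
      Qaux N d p m mT r x a = Qaux N d' p m mT r x a := by
  intro r
  induction r with
  | zero => intro _ _ x a; rfl
  | succ r ih =>
    intro hr h x a
    rw [Qaux, Qaux]
    refine Finset.sum_congr rfl fun x' _ => Finset.sum_congr rfl fun a' _ => ?_
    rw [h (N - r) (by omega), ih (by omega) (fun k hk => h k (by omega)) x' a']

lemma theta_congr (d' : ℕ → S → A → ℝ) (t : ℕ) (h : ∀ k, k < t → d k = d' k) (x : S) :
    theta α d p m t x = theta α d' p m t x := by
  unfold theta
  refine Finset.sum_congr rfl fun s _ => Finset.sum_congr rfl fun a _ => ?_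
  have : ∀ k : Fin t, d k = d' k := fun k => h k k.isLt
  simp only [this]

lemma sum_swap4 {β γ : Type*} [Fintype β] [Fintype γ] (F : S → A → β → γ → ℝ) :
    ∑ x : S, ∑ b : A, ∑ y : β, ∑ c : γ, F x b y c
      = ∑ y : β, ∑ c : γ, ∑ x : S, ∑ b : A, F x b y c := by
  trans ∑ x : S, ∑ y : β, ∑ b : A, ∑ c : γ, F x b y c
  · exact Finset.sum_congr rfl fun x _ => Finset.sum_comm
  trans ∑ y : β, ∑ x : S, ∑ b : A, ∑ c : γ, F x b y c
  · exact Finset.sum_comm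
  refine Finset.sum_congr rfl fun y _ => ?_
  trans ∑ x : S, ∑ c : γ, ∑ b : A, F x b y c
  · exact Finset.sum_congr rfl fun x _ => Finset.sum_comm
  · exact Finset.sum_comm

lemma fF_step (t : ℕ) (ht : t < N) :
    fF N α d d p m mT t = fF N α d d p m mT (t+1) := by
  unfold fF
  have hrec : ∀ x a, Qb N d p m mT t x a = ∑ x' : S, ∑ a' : A,
      Real.exp (m t x a x') * p t x a x' * d (t+1) x' a' * Qb N d p m mT (t+1) x' a' :=
    Qb_rec N d p m mT ht
  simp only [hrec, theta_succ, Finset.mul_sum, Finset.sum_mul]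
  rw [sum_swap4]
  refine Finset.sum_congr rfl fun x' _ => Finset.sum_congr rfl fun a' _ =>
    Finset.sum_congr rfl fun x _ => Finset.sum_congr rfl fun b _ => ?_
  ring

lemma fF_last (hd : ∀ x, ∑ a : A, d N x a = 1) :
    fF N α d d p m mT N = J N α d p m mT := by
  rw [J_eq_theta]
  unfold fF Qb
  simp only [Nat.sub_self]
  refine Finset.sum_congr rfl fun x _ => ?_
  have hq : ∀ a : A, Qaux N d p m mT 0 x a = Real.exp (mT x) := fun a => rfl
  simp only [hq]
  rw [show (∑ a : A, theta α d p m N x * d N x a * Real.exp (mT x))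
      = (∑ a : A, d N x a) * (theta α d p m N x * Real.exp (mT x)) by
    rw [Finset.sum_mul]; exact Finset.sum_congr rfl fun a _ => by ring]
  rw [hd x, one_mul]

lemma fF_self (hd : ∀ x, ∑ a : A, d N x a = 1) (t : ℕ) (htN : t ≤ N) :
    fF N α d d p m mT t = J N α d p m mT := by
  obtain ⟨j, hj⟩ : ∃ j, t + j = N := ⟨N - t, by omega⟩
  induction j generalizing t with
  | zero => simp only [Nat.add_zero] at hj; subst hj; exact fF_last _ α d p m mT hd
  | succ j ih =>
    rw [fF_step N α d p m mT t (by omega)]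
    exact ih (t+1) (by omega) (by omega)

end Aux

/-- `f_t(Π̃, Θ^Π_m, Q^Π_m) = J_m(η^t_{Π,Π̃}, α_m)` where `η^t_{Π,Π̃}` differs
from `Π` only at epoch `t`. -/
theorem f_eq_J_one_step (N : ℕ) (α : S → ℝ) (d dtil : ℕ → S → A → ℝ)
    (p : ℕ → S → A → S → ℝ) (m : ℕ → S → A → S → ℝ) (mT : S → ℝ)
    (hd : isPolicy d) (hdtil : isPolicy dtil) (hp : isKernel p) (hα : isDist α)
    (t : ℕ) (ht : t < N) :
    fF N α d dtil p m mT t = J N α (update d dtil t) p m mT := by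
  have key : fF N α d dtil p m mT t = fF N α (update d dtil t) (update d dtil t) p m mT t := by
    unfold fF
    refine Finset.sum_congr rfl fun x _ => Finset.sum_congr rfl fun a _ => ?_
    have h1 : theta α d p m t x = theta α (update d dtil t) p m t x :=
      theta_congr α d p m (update d dtil t) t
        (fun k hk => by simp [update, Nat.ne_of_lt hk]) x
    have h2 : Qb N d p m mT t x a = Qb N (update d dtil t) p m mT t x a := by
      unfold Qb
      exact Qaux_congr N d p m mT (update d dtil t) (N - t) (by omega)
        (fun k hk => by
          have hkt : k ≠ t := by omega
          simp [update, hkt]) x a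
    have h3 : dtil t x a = update d dtil t t x a := by simp [update]
    rw [h1, h2, h3]
  rw [key]
  exact fF_self N α (update d dtil t) p m mT
    (fun x => by
      by_cases h : N = t <;> simp [update, h, hd.2, hdtil.2]) t (le_of_lt ht)

end RiskCMDP
end
end

section
/- A Markovian policy Π is feasible for the risk-sensitive constrained MDP (i.e., J_c(Π, α_c) ≤ B) if and only if it is feasible for its own linear program LP(Π), i.e., f_t(Π, Θ^Π_c, Q^Π_c) ≤ B for all 1 ≤ t ≤ T-1. -/
open Finset Real MeasureTheory

noncomputable section

variable {S A : Type*} [Fintype S] [Fintype A] [DecidableEq S] [DecidableEq A]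

namespace RiskCMDP

/-- Partially unrolled value: prefix trajectories up to time `t`, then backward factor. -/
def Fsum (N : ℕ) (α : S → ℝ) (d : ℕ → S → A → ℝ) (p : ℕ → S → A → S → ℝ)
    (m : ℕ → S → A → S → ℝ) (mT : S → ℝ) (t : ℕ) : ℝ :=
  ∑ s : Fin (t+1) → S, ∑ a : Fin t → A,
    (α (s 0) * ∏ k : Fin t, (d k (s k.castSucc) (a k) * p k (s k.castSucc) (a k) (s k.succ)
        * Real.exp (m k (s k.castSucc) (a k) (s k.succ))))
    * ∑ a' : A, d t (s (Fin.last t)) a' * Qb N d p m mT t (s (Fin.last t)) a'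

lemma theta_mul_sum (α : S → ℝ) (d : ℕ → S → A → ℝ) (p : ℕ → S → A → S → ℝ)
    (m : ℕ → S → A → S → ℝ) (t : ℕ) (h : S → ℝ) :
    ∑ x : S, theta α d p m t x * h x =
      ∑ s : Fin (t+1) → S, ∑ a : Fin t → A,
        (α (s 0) * ∏ k : Fin t, (d k (s k.castSucc) (a k) * p k (s k.castSucc) (a k) (s k.succ)
          * Real.exp (m k (s k.castSucc) (a k) (s k.succ)))) * h (s (Fin.last t)) := by
  unfold theta
  simp only [Finset.sum_mul, ite_mul, zero_mul]
  rw [Finset.sum_comm]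
  refine Finset.sum_congr rfl fun s _ => ?_
  rw [Finset.sum_comm]
  refine Finset.sum_congr rfl fun a _ => ?_
  rw [Finset.sum_ite_eq]
  simp

lemma fF_eq_Fsum (N : ℕ) (α : S → ℝ) (d : ℕ → S → A → ℝ) (p : ℕ → S → A → S → ℝ)
    (m : ℕ → S → A → S → ℝ) (mT : S → ℝ) (t : ℕ) :
    fF N α d d p m mT t = Fsum N α d p m mT t := by
  unfold fF Fsum
  rw [← theta_mul_sum α d p m t (fun x => ∑ a' : A, d t x a' * Qb N d p m mT t x a')]
  refine Finset.sum_congr rfl fun x _ => ?_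
  rw [Finset.mul_sum]
  exact Finset.sum_congr rfl fun a _ => by ring

lemma Qb_succ (N : ℕ) (d : ℕ → S → A → ℝ) (p : ℕ → S → A → S → ℝ)
    (m : ℕ → S → A → S → ℝ) (mT : S → ℝ) (t : ℕ) (ht : t < N) (x : S) (a : A) :
    Qb N d p m mT t x a = ∑ x' : S, ∑ a' : A,
      Real.exp (m t x a x') * p t x a x' * d (t+1) x' a' * Qb N d p m mT (t+1) x' a' := by
  unfold Qb
  have h1 : N - t = (N - (t+1)) + 1 := by omega
  rw [h1, Qaux]
  have h2 : N - (N - (t+1) + 1) = t := by omega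
  have h3 : N - (N - (t+1)) = t + 1 := by omega
  rw [h2, h3]

lemma Fsum_step (N : ℕ) (α : S → ℝ) (d : ℕ → S → A → ℝ) (p : ℕ → S → A → S → ℝ)
    (m : ℕ → S → A → S → ℝ) (mT : S → ℝ) (t : ℕ) (ht : t < N) :
    Fsum N α d p m mT t = Fsum N α d p m mT (t+1) := by
  conv_rhs => rw [Fsum, ← Equiv.sum_comp (Fin.snocEquiv (fun _ : Fin (t+2) => S)),
    Fintype.sum_prod_type]
  simp only [Fin.snocEquiv_apply]
  conv_rhs => rw [Finset.sum_comm]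
  conv_lhs => rw [Fsum]
  refine Finset.sum_congr rfl fun s _ => ?_
  conv_rhs =>
    enter [2, x]
    rw [← Equiv.sum_comp (Fin.snocEquiv (fun _ : Fin (t+1) => A)), Fintype.sum_prod_type]
  simp only [Fin.snocEquiv_apply]
  -- expand LHS using Qb_succ and push sums
  simp only [Qb_succ N d p m mT t ht]
  simp only [Finset.mul_sum, Finset.sum_mul]
  -- reorder LHS: ∑ a ∑ aT ∑ x ∑ a'' → ∑ x ∑ a ∑ aT ∑ a''
  conv_lhs =>
    enter [2, a]
    rw [Finset.sum_comm]
  conv_lhs => rw [Finset.sum_comm]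
  -- reorder RHS: ∑ x ∑ aT ∑ a ∑ a'' → ∑ x ∑ a ∑ aT ∑ a''
  conv_rhs =>
    enter [2, x]
    rw [Finset.sum_comm]
  refine Finset.sum_congr rfl fun x _ => ?_
  refine Finset.sum_congr rfl fun a _ => ?_
  refine Finset.sum_congr rfl fun aT _ => ?_
  refine Finset.sum_congr rfl fun a2 _ => ?_
  -- simplify snoc applications on the RHS
  rw [Fin.prod_univ_castSucc]
  have hcast : ∀ (k : Fin t), (Fin.snoc s x : Fin (t+2) → S) k.castSucc.castSucc
      = s k.castSucc := fun k => Fin.snoc_castSucc _ _ _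
  have hsucc : ∀ (k : Fin t), (Fin.snoc s x : Fin (t+2) → S) k.castSucc.succ
      = s k.succ := by
    intro k
    rw [show (k.castSucc.succ : Fin (t+2)) = (k.succ).castSucc from (Fin.succ_castSucc k).symm]
    exact Fin.snoc_castSucc _ _ _
  have hlastc : (Fin.snoc s x : Fin (t+2) → S) (Fin.last t).castSucc
      = s (Fin.last t) := Fin.snoc_castSucc _ _ _
  have haK : ∀ (k : Fin t), (Fin.snoc a aT : Fin (t+1) → A) k.castSucc = a k :=
    fun k => Fin.snoc_castSucc _ _ _
  have halast : (Fin.snoc a aT : Fin (t+1) → A) (Fin.last t) = aT := Fin.snoc_last _ _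
  have h0 : (Fin.snoc s x : Fin (t+2) → S) 0 = s 0 := by
    rw [show (0 : Fin (t+2)) = ((0 : Fin (t+1)).castSucc) from rfl]
    exact Fin.snoc_castSucc _ _ _
  have hls : (Fin.snoc s x : Fin (t+2) → S) ((Fin.last t).succ) = x := by
    rw [show ((Fin.last t).succ : Fin (t+2)) = Fin.last (t+1) from rfl]
    exact Fin.snoc_last _ _
  simp only [hcast, hsucc, hlastc, haK, halast, h0, hls, Fin.snoc_last,
    Fin.coe_castSucc, Fin.val_last, Fin.val_succ]
  ring

lemma Fsum_N (N : ℕ) (α : S → ℝ) (d : ℕ → S → A → ℝ) (p : ℕ → S → A → S → ℝ)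
    (m : ℕ → S → A → S → ℝ) (mT : S → ℝ) (hd : isPolicy d) :
    Fsum N α d p m mT N = J N α d p m mT := by
  unfold Fsum J
  refine Finset.sum_congr rfl fun s _ => Finset.sum_congr rfl fun a _ => ?_
  have hQ : ∀ a' : A, Qb N d p m mT N (s (Fin.last N)) a' = Real.exp (mT (s (Fin.last N))) := by
    intro a'
    unfold Qb
    rw [Nat.sub_self]
    rfl
  simp only [hQ, ← Finset.sum_mul, hd.2]
  rw [one_mul]
  unfold trajWeight totalCost
  rw [Real.exp_add, Real.exp_sum, Finset.prod_mul_distrib]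
  ring

lemma Fsum_eq_J (N : ℕ) (α : S → ℝ) (d : ℕ → S → A → ℝ) (p : ℕ → S → A → S → ℝ)
    (m : ℕ → S → A → S → ℝ) (mT : S → ℝ) (hd : isPolicy d) (t : ℕ) (ht : t ≤ N) :
    Fsum N α d p m mT t = J N α d p m mT := by
  have key : ∀ k t', t' + k = N → Fsum N α d p m mT t' = J N α d p m mT := by
    intro k
    induction k with
    | zero => intro t' h; rw [Nat.add_zero] at h; subst h; exact Fsum_N _ α d p m mT hd
    | succ k ih =>
      intro t' h
      rw [Fsum_step N α d p m mT t' (by omega)]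
      exact ih (t'+1) (by omega)
  exact key (N - t) t (by omega)

/-- a Markovian policy `Π` satisfies `J_c(Π, α_c) ≤ B` iff it is feasible
for its own LP, i.e. `f_t(Π, Θ^Π_c, Q^Π_c) ≤ B` for all decision epochs `t`. -/
theorem feasibility_equivalence (N : ℕ) (hN : 0 < N) (αc : S → ℝ)
    (p : ℕ → S → A → S → ℝ) (c : ℕ → S → A → S → ℝ) (cT : S → ℝ) (B : ℝ)
    (hp : isKernel p) (hαc : isDist αc) (hB : 0 < B)
    (d : ℕ → S → A → ℝ) (hd : isPolicy d) :
    J N αc d p c cT ≤ B ↔ ∀ t, t < N → fF N αc d d p c cT t ≤ B := by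
  constructor
  · intro h t ht
    rw [fF_eq_Fsum, Fsum_eq_J N αc d p c cT hd t (le_of_lt ht)]
    exact h
  · intro h
    have := h 0 hN
    rwa [fF_eq_Fsum, Fsum_eq_J N αc d p c cT hd 0 (le_of_lt hN)] at this

end RiskCMDP
end
end
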